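/- For positive integers p1, p2, q1, q2, r1, r2, the Laurent polynomial Δ(s) = s·[q1][q2]([p1][p2][r1+r2] + [r1][r2][p1+p2]) + [p1+p2][q1+q2][r1+r2] is symmetric about (p1+p2+q1+q2+r1+r2−3)/2; that is, the coefficient of s^k equals the coefficient of s^{p1+p2+q1+q2+r1+r2−3−k} for all k. -/

import Mathlib

/-
Call `f` palindromic of width `N` when `deg f ≤ N` and reversing its coefficients in
`0, …, N` leaves `f` unchanged. Palindromic polynomials of a common width are closed under
addition, and widths add under multiplication. Each `[n]` is palindromic of width `n - 1` and
`s` of width `2`, so the two summands of `s·[q1][q2](…)`, the product `[p1+p2][q1+q2][r1+r2]`,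
and hence `Δ`, are all palindromic of width `p1 + p2 + q1 + q2 + r1 + r2 - 3`.
-/

open Polynomial

/-- `qpoly n = 1 + s + ⋯ + s^(n-1)`, denoted `[n]` in the paper. -/
noncomputable def qpoly (n : ℕ) : Polynomial ℤ :=
  ∑ i ∈ Finset.range n, Polynomial.X ^ i

namespace Polynomial

variable {R : Type*} [Semiring R]

def IsPalindromic (f : R[X]) (N : ℕ) : Prop :=
  f.natDegree ≤ N ∧ f.reflect N = f

namespace IsPalindromic

variable {f g : R[X]} {M N : ℕ}

theorem add (hf : f.IsPalindromic N) (hg : g.IsPalindromic N) : (f + g).IsPalindromic N :=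
  ⟨natDegree_add_le_of_degree_le hf.1 hg.1, by rw [reflect_add, hf.2, hg.2]⟩

theorem mul (hf : f.IsPalindromic M) (hg : g.IsPalindromic N) :
    (f * g).IsPalindromic (M + N) :=
  ⟨natDegree_mul_le.trans (add_le_add hf.1 hg.1), by rw [reflect_mul _ _ hf.1 hg.1, hf.2, hg.2]⟩

theorem coeff_eq {k : ℕ} (hf : f.IsPalindromic N) (hk : k ≤ N) :
    f.coeff k = f.coeff (N - k) := by
  conv_lhs => rw [← hf.2]
  rw [coeff_reflect, revAt_le hk]

end IsPalindromic

theorem isPalindromic_X : (X : R[X]).IsPalindromic 2 :=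
  ⟨natDegree_X_le.trans one_le_two, by simpa using reflect_monomial (R := R) 2 1⟩

end Polynomial

lemma qpoly_coeff (n k : ℕ) : (qpoly n).coeff k = if k < n then 1 else 0 := by
  simp [qpoly, coeff_X_pow, Finset.sum_ite_eq]

lemma isPalindromic_qpoly (n : ℕ) : (qpoly n).IsPalindromic (n - 1) := by
  refine ⟨natDegree_le_iff_coeff_eq_zero.2 fun k hk ↦ ?_, ?_⟩
  · rw [qpoly_coeff, if_neg (by omega)]
  · ext k
    rw [coeff_reflect, qpoly_coeff, qpoly_coeff]
    rcases le_or_gt k (n - 1) with hk | hk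
    · rw [revAt_le hk]
      split_ifs <;> omega
    · rw [revAt_eq_self_of_lt hk]

theorem alexander_two_block_symmetric (p1 p2 q1 q2 r1 r2 : ℕ)
    (hp1 : 1 ≤ p1) (hp2 : 1 ≤ p2) (hq1 : 1 ≤ q1) (hq2 : 1 ≤ q2)
    (hr1 : 1 ≤ r1) (hr2 : 1 ≤ r2) :
    ∀ k ≤ p1 + p2 + q1 + q2 + r1 + r2 - 3,
      (Polynomial.X * (qpoly q1 * qpoly q2 *
            (qpoly p1 * qpoly p2 * qpoly (r1 + r2) +
              qpoly r1 * qpoly r2 * qpoly (p1 + p2))) +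
          qpoly (p1 + p2) * qpoly (q1 + q2) * qpoly (r1 + r2)).coeff k =
        (Polynomial.X * (qpoly q1 * qpoly q2 *
            (qpoly p1 * qpoly p2 * qpoly (r1 + r2) +
              qpoly r1 * qpoly r2 * qpoly (p1 + p2))) +
          qpoly (p1 + p2) * qpoly (q1 + q2) * qpoly (r1 + r2)).coeff
          (p1 + p2 + q1 + q2 + r1 + r2 - 3 - k) := by
  intro k hk
  set B := qpoly p1 * qpoly p2 * qpoly (r1 + r2) + qpoly r1 * qpoly r2 * qpoly (p1 + p2)
  have hB : B.IsPalindromic (p1 + p2 + r1 + r2 - 3) := by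
    refine .add ?_ ?_
    · convert ((isPalindromic_qpoly p1).mul (isPalindromic_qpoly p2)).mul
        (isPalindromic_qpoly (r1 + r2)) using 1
      omega
    · convert ((isPalindromic_qpoly r1).mul (isPalindromic_qpoly r2)).mul
        (isPalindromic_qpoly (p1 + p2)) using 1
      omega
  have hXAB : (X * (qpoly q1 * qpoly q2 * B)).IsPalindromic
      (p1 + p2 + q1 + q2 + r1 + r2 - 3) := by
    convert isPalindromic_X.mul
      (((isPalindromic_qpoly q1).mul (isPalindromic_qpoly q2)).mul hB) using 1
    omega
  have hT : (qpoly (p1 + p2) * qpoly (q1 + q2) * qpoly (r1 + r2)).IsPalindromic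
      (p1 + p2 + q1 + q2 + r1 + r2 - 3) := by
    convert ((isPalindromic_qpoly (p1 + p2)).mul (isPalindromic_qpoly (q1 + q2))).mul
      (isPalindromic_qpoly (r1 + r2)) using 1
    omega
  exact (hXAB.add hT).coeff_eq hk
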